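/- Let $s \ge 1$, $\lambda \in (1/2, 1]$, let $B_1, \dots, B_s$ and $b_1, \dots, b_s$ be positive real numbers, and set $\rho := \dfrac{2\zeta(2\lambda)}{(2\pi^2)^\lambda}$ where $\zeta(x) = \sum_{k=1}^{\infty} k^{-x}$. For each nonempty $\mathfrak{u} \subseteq \{1,\dots,s\}$ define $\gamma_{\mathfrak{u}}(\lambda) := \Big(B_{|\mathfrak{u}|} \prod_{j\in\mathfrak{u}} \frac{(2\pi^2)^\lambda b_j^2}{2\zeta(2\lambda)}\Big)^{\frac{1}{1+\lambda}}$. Then for every family of positive reals $(\gamma_{\mathfrak{u}})_{\emptyset\neq\mathfrak{u}\subseteq\{1,\dots,s\}}$, $\Big(\sum_{\emptyset\neq\mathfrak{u}} \gamma_{\mathfrak{u}}(\lambda)^{\lambda} \rho^{|\mathfrak{u}|}\Big)^{1/\lambda} \Big(\sum_{\emptyset\neq\mathfrak{u}} \frac{B_{|\mathfrak{u}|}\prod_{j\in\mathfrak{u}} b_j^2}{\gamma_{\mathfrak{u}}(\lambda)}\Big) \;\le\; \Big(\sum_{\emptyset\neq\mathfrak{u}} \gamma_{\mathfrak{u}}^{\lambda}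 \rho^{|\mathfrak{u}|}\Big)^{1/\lambda} \Big(\sum_{\emptyset\neq\mathfrak{u}} \frac{B_{|\mathfrak{u}|}\prod_{j\in\mathfrak{u}} b_j^2}{\gamma_{\mathfrak{u}}}\Big)$. -/

import Mathlib

/-!
Write `a_u = B_{|u|} ∏_{j∈u} b_j²` and `r_u = ρ^{|u|}`. The POD weights `w_u` are exactly the
solutions of `w_u^{1+λ} r_u = a_u`, which makes both factors on the left sums of the same terms
`w_u^λ r_u = a_u / w_u`; call their common value `S`. For any positive `γ` and `θ = 1/(1+λ)`,
`w_u^λ r_u = (γ_u^λ r_u)^θ (a_u/γ_u)^{1-θ}`, so Hölder's inequality gives `S ≤ X^θ Y^{1-θ}`,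
where `X` and `Y` are the two sums on the right; raising this to the power `(1+λ)/λ` gives
`S^{1/λ} S ≤ X^{1/λ} Y`.
-/

/-- `zetaSum x = ∑_{k=1}^∞ k^{-x}`, the Riemann zeta function as a real series. -/
noncomputable def zetaSum (x : ℝ) : ℝ := ∑' k : ℕ, ((k : ℝ) + 1) ^ (-x)

open Finset

lemma zetaSum_pos {x : ℝ} (hx : 1 < x) : 0 < zetaSum x := by
  have hsum : Summable fun k : ℕ => ((k : ℝ) + 1) ^ (-x) := by
    have h := Real.summable_nat_rpow.2 (by linarith : -x < -1)
    exact ((summable_nat_add_iff 1).2 h).congr fun n => by push_cast; rfl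
  calc (0 : ℝ) < ((0 : ℕ) + 1 : ℝ) ^ (-x) := Real.rpow_pos_of_pos (by norm_num) _
    _ ≤ zetaSum x := hsum.le_tsum 0 fun n _ => Real.rpow_nonneg (by positivity) _

theorem Real.sum_rpow_mul_rpow_one_sub_le {ι : Type*} (s : Finset ι) {f g : ι → ℝ} {θ : ℝ}
    (hθ₀ : 0 < θ) (hθ₁ : θ < 1) (hf : ∀ i ∈ s, 0 ≤ f i) (hg : ∀ i ∈ s, 0 ≤ g i) :
    ∑ i ∈ s, f i ^ θ * g i ^ (1 - θ) ≤ (∑ i ∈ s, f i) ^ θ * (∑ i ∈ s, g i) ^ (1 - θ) := by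
  have H := Real.inner_le_Lp_mul_Lq_of_nonneg s
    (Real.HolderConjugate.inv_inv (a := θ) (b := 1 - θ) hθ₀ (by linarith) (by ring))
    (fun i hi => Real.rpow_nonneg (hf i hi) θ) (fun i hi => Real.rpow_nonneg (hg i hi) (1 - θ))
  simp only [one_div, inv_inv] at H
  convert H using 3 <;> refine sum_congr rfl fun i hi => ?_
  · exact (Real.rpow_rpow_inv (hf i hi) hθ₀.ne').symm
  · exact (Real.rpow_rpow_inv (hg i hi) (by linarith)).symm

lemma rpow_mul_eq_rpow_mul_rpow_one_sub {lam w r γ : ℝ} (hlam : 0 < lam) (hw : 0 < w)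
    (hr : 0 < r) (hγ : 0 < γ) :
    w ^ lam * r =
      (γ ^ lam * r) ^ (1 / (1 + lam)) * (w ^ (1 + lam) * r / γ) ^ (1 - 1 / (1 + lam)) := by
  refine Real.log_injOn_pos (Set.mem_Ioi.2 (by positivity)) (Set.mem_Ioi.2 (by positivity)) ?_
  rw [Real.log_mul (by positivity) (by positivity), Real.log_rpow hw,
    Real.log_mul (by positivity) (by positivity), Real.log_rpow (by positivity),
    Real.log_rpow (by positivity), Real.log_mul (by positivity) (by positivity),
    Real.log_rpow hγ, Real.log_div (by positivity) hγ.ne',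
    Real.log_mul (by positivity) (by positivity), Real.log_rpow hw]
  field_simp
  ring

lemma rpow_one_div_mul_self_le {lam S X Y : ℝ} (hlam : 0 < lam) (hS : 0 ≤ S) (hX : 0 ≤ X)
    (hY : 0 ≤ Y) (h : S ≤ X ^ (1 / (1 + lam)) * Y ^ (1 - 1 / (1 + lam))) :
    S ^ (1 / lam) * S ≤ X ^ (1 / lam) * Y := by
  have hexp : 0 < 1 / lam + 1 := by positivity
  calc S ^ (1 / lam) * S = S ^ (1 / lam + 1) := (Real.rpow_add_one' hS hexp.ne').symm
    _ ≤ (X ^ (1 / (1 + lam)) * Y ^ (1 - 1 / (1 + lam))) ^ (1 / lam + 1) := by gcongr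
    _ = X ^ (1 / lam) * Y := by
      rw [Real.mul_rpow (by positivity) (by positivity), ← Real.rpow_mul hX, ← Real.rpow_mul hY,
        show 1 / (1 + lam) * (1 / lam + 1) = 1 / lam by field_simp,
        show (1 - 1 / (1 + lam)) * (1 / lam + 1) = 1 by field_simp; ring, Real.rpow_one]

theorem rpow_sum_mul_sum_div_le_of_eq_rpow_mul {ι : Type*} (s : Finset ι) {lam : ℝ}
    (hlam : 0 < lam) {a r w γ : ι → ℝ} (hr : ∀ i ∈ s, 0 < r i) (hw : ∀ i ∈ s, 0 < w i)
    (hγ : ∀ i ∈ s, 0 < γ i) (ha : ∀ i ∈ s, a i = w i ^ (1 + lam) * r i) :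
    (∑ i ∈ s, w i ^ lam * r i) ^ (1 / lam) * ∑ i ∈ s, a i / w i ≤
      (∑ i ∈ s, γ i ^ lam * r i) ^ (1 / lam) * ∑ i ∈ s, a i / γ i := by
  have ha_pos : ∀ i ∈ s, 0 < a i := fun i hi =>
    ha i hi ▸ mul_pos (Real.rpow_pos_of_pos (hw i hi) _) (hr i hi)
  have hX : ∀ i ∈ s, 0 ≤ γ i ^ lam * r i := fun i hi =>
    (mul_pos (Real.rpow_pos_of_pos (hγ i hi) _) (hr i hi)).le
  have hY : ∀ i ∈ s, 0 ≤ a i / γ i := fun i hi => (div_pos (ha_pos i hi) (hγ i hi)).le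
  have hθ : 1 / (1 + lam) < 1 := by rw [div_lt_one (by positivity)]; linarith
  have hnorm : ∑ i ∈ s, a i / w i = ∑ i ∈ s, w i ^ lam * r i := sum_congr rfl fun i hi => by
    rw [ha i hi, add_comm, Real.rpow_add_one (hw i hi).ne']
    field_simp [(hw i hi).ne']
  have hholder : ∑ i ∈ s, w i ^ lam * r i ≤
      (∑ i ∈ s, γ i ^ lam * r i) ^ (1 / (1 + lam)) *
        (∑ i ∈ s, a i / γ i) ^ (1 - 1 / (1 + lam)) :=
    calc ∑ i ∈ s, w i ^ lam * r i
        = ∑ i ∈ s, (γ i ^ lam * r i) ^ (1 / (1 + lam)) * (a i / γ i) ^ (1 - 1 / (1 + lam)) :=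
          sum_congr rfl fun i hi => ha i hi ▸
            rpow_mul_eq_rpow_mul_rpow_one_sub hlam (hw i hi) (hr i hi) (hγ i hi)
      _ ≤ _ := Real.sum_rpow_mul_rpow_one_sub_le s (by positivity) hθ hX hY
  rw [hnorm]
  exact rpow_one_div_mul_self_le hlam
    (sum_nonneg fun i hi => (mul_pos (Real.rpow_pos_of_pos (hw i hi) _) (hr i hi)).le)
    (sum_nonneg hX) (sum_nonneg hY) hholder

theorem pod_weights_minimise_bound_general (s : ℕ) (lam : ℝ)
    (hlam : lam ∈ Set.Ioc (1 / 2 : ℝ) 1)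
    (B b : ℕ → ℝ)
    (hB : ∀ ℓ ∈ Finset.Icc 1 s, 0 < B ℓ) (hb : ∀ j ∈ Finset.Icc 1 s, 0 < b j) :
    ∀ γ : Finset ℕ → ℝ,
      (∀ u ∈ (Finset.Icc 1 s).powerset.filter (· ≠ ∅), 0 < γ u) →
      (∑ u ∈ (Finset.Icc 1 s).powerset.filter (· ≠ ∅),
            ((B u.card * ∏ j ∈ u,
                (2 * Real.pi ^ 2) ^ lam * b j ^ 2 / (2 * zetaSum (2 * lam))) ^
              (1 / (1 + lam))) ^ lam *
              (2 * zetaSum (2 * lam) / (2 * Real.pi ^ 2) ^ lam) ^ u.card) ^ (1 / lam) *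
          (∑ u ∈ (Finset.Icc 1 s).powerset.filter (· ≠ ∅),
            B u.card * (∏ j ∈ u, b j ^ 2) /
              (B u.card * ∏ j ∈ u,
                (2 * Real.pi ^ 2) ^ lam * b j ^ 2 / (2 * zetaSum (2 * lam))) ^
                (1 / (1 + lam)))
        ≤ (∑ u ∈ (Finset.Icc 1 s).powerset.filter (· ≠ ∅),
              γ u ^ lam *
                (2 * zetaSum (2 * lam) / (2 * Real.pi ^ 2) ^ lam) ^ u.card) ^ (1 / lam) *
            (∑ u ∈ (Finset.Icc 1 s).powerset.filter (· ≠ ∅),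
              B u.card * (∏ j ∈ u, b j ^ 2) / γ u) := by
  intro γ hγ
  have hlam₀ : 0 < lam := by linarith [hlam.1]
  have hζ : 0 < 2 * zetaSum (2 * lam) := mul_pos two_pos (zetaSum_pos (by linarith [hlam.1]))
  set ρ := 2 * zetaSum (2 * lam) / (2 * Real.pi ^ 2) ^ lam
  have hρ : 0 < ρ := div_pos hζ (by positivity)
  have hpod : ∀ u : Finset ℕ, B u.card * ∏ j ∈ u,
      (2 * Real.pi ^ 2) ^ lam * b j ^ 2 / (2 * zetaSum (2 * lam)) =
        B u.card * (∏ j ∈ u, b j ^ 2) / ρ ^ u.card := fun u => by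
    rw [mul_div_assoc, ← prod_const, ← prod_div_distrib]
    exact congrArg _ (prod_congr rfl fun j _ => by simp only [ρ]; field_simp)
  have ha_pos : ∀ u ∈ (Icc 1 s).powerset.filter (· ≠ ∅), 0 < B u.card * ∏ j ∈ u, b j ^ 2 := by
    intro u hu
    obtain ⟨hsub, hne⟩ := mem_filter.1 hu
    have hcard : u.card ∈ Icc 1 s := mem_Icc.2 ⟨card_pos.2 (nonempty_iff_ne_empty.2 hne),
      (card_le_card (mem_powerset.1 hsub)).trans_eq (Nat.card_Icc 1 s)⟩
    exact mul_pos (hB _ hcard) (prod_pos fun j hj => pow_pos (hb j (mem_powerset.1 hsub hj)) 2)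
  refine rpow_sum_mul_sum_div_le_of_eq_rpow_mul _ hlam₀ (fun u _ => pow_pos hρ _)
    (fun u hu => ?_) hγ (fun u hu => ?_) <;> rw [hpod]
  · exact Real.rpow_pos_of_pos (div_pos (ha_pos u hu) (pow_pos hρ _)) _
  · rw [one_div, Real.rpow_inv_rpow (div_pos (ha_pos u hu) (pow_pos hρ _)).le (by positivity),
      div_mul_cancel₀ _ (pow_pos hρ _).ne']

/-- The POD weights `γ_u(λ) = (B_{|u|} ∏_{j∈u} (2π²)^λ b_j² / (2ζ(2λ)))^{1/(1+λ)}`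
minimise the CBC error bound: for any other choice of positive weights the product of
the worst-case-error bound and the norm bound is at least as large. -/
theorem pod_weights_minimise_bound (s : ℕ) (hs : 1 ≤ s) (lam : ℝ)
    (hlam : lam ∈ Set.Ioc (1 / 2 : ℝ) 1)
    (B b : ℕ → ℝ)
    (hB : ∀ ℓ ∈ Finset.Icc 1 s, 0 < B ℓ) (hb : ∀ j ∈ Finset.Icc 1 s, 0 < b j) :
    ∀ γ : Finset ℕ → ℝ,
      (∀ u ∈ (Finset.Icc 1 s).powerset.filter (· ≠ ∅), 0 < γ u) →
      (∑ u ∈ (Finset.Icc 1 s).powerset.filter (· ≠ ∅),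
            ((B u.card * ∏ j ∈ u,
                (2 * Real.pi ^ 2) ^ lam * b j ^ 2 / (2 * zetaSum (2 * lam))) ^
              (1 / (1 + lam))) ^ lam *
              (2 * zetaSum (2 * lam) / (2 * Real.pi ^ 2) ^ lam) ^ u.card) ^ (1 / lam) *
          (∑ u ∈ (Finset.Icc 1 s).powerset.filter (· ≠ ∅),
            B u.card * (∏ j ∈ u, b j ^ 2) /
              (B u.card * ∏ j ∈ u,
                (2 * Real.pi ^ 2) ^ lam * b j ^ 2 / (2 * zetaSum (2 * lam))) ^
                (1 / (1 + lam)))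
        ≤ (∑ u ∈ (Finset.Icc 1 s).powerset.filter (· ≠ ∅),
              γ u ^ lam *
                (2 * zetaSum (2 * lam) / (2 * Real.pi ^ 2) ^ lam) ^ u.card) ^ (1 / lam) *
            (∑ u ∈ (Finset.Icc 1 s).powerset.filter (· ≠ ∅),
              B u.card * (∏ j ∈ u, b j ^ 2) / γ u) :=
  pod_weights_minimise_bound_general s lam hlam B b hB hb
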